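/- arXiv:1909.04732 — 5 statements merged into one kernel-verified Lean document; each statement's English description precedes it below -/
import Mathlib

section
/- Let G be a finite group, H a subgroup, and T a finite G-set of cardinality n determined by a homomorphism f : G → Σ_n (so the graph subgroup Γ_T = {(g, f(g)) : g ∈ G} ≤ G × Σ_n). Then the map φ sending a G-equivariant automorphism σ of T (viewed as an element of Σ_n commuting with the image of f) to the class of (e, σ) in the Weyl group W_{G×Σ_n}(Γ_T) = N_{G×Σ_n}(Γ_T)/Γ_T is a group isomorphism Aut_G(T) ≅ W_{G×Σ_n}(Γ_T). -/
/-!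
An element `(g, s)` of the normalizer of `Γ = graph f` is congruent modulo `Γ` to
`(g, f g)⁻¹ * (g, s) = (1, (f g)⁻¹ * s)`, and `(1, σ)` normalizes `Γ` exactly when `σ` commutes
with the image of `f`. So `σ ↦ [(1, σ)]` hits every class, and it is injective since
`(1, σ) ∈ Γ` forces `σ = f 1 = 1`.
-/

def MonoidHom.graphSubgroup {G S : Type*} [Group G] [Group S] (f : G →* S) :
    Subgroup (G × S) where
  carrier := {p | p.2 = f p.1}
  one_mem' := by simp
  mul_mem' := by
    rintro ⟨a, b⟩ ⟨c, d⟩ (hb : b = f a) (hd : d = f c)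
    simp [hb, hd]
  inv_mem' := by
    rintro ⟨a, b⟩ (hb : b = f a)
    simp [hb]

namespace MonoidHom

variable {G S : Type*} [Group G] [Group S] (f : G →* S)

theorem mem_graphSubgroup_iff (p : G × S) : p ∈ f.graphSubgroup ↔ p.2 = f p.1 := Iff.rfl

theorem mk_one_mem_normalizer_graphSubgroup_iff (σ : S) :
    ((1 : G), σ) ∈ Subgroup.normalizer (f.graphSubgroup : Set (G × S)) ↔
      σ ∈ Subgroup.centralizer (Set.range f) := by
  simp only [Subgroup.mem_set_normalizer_iff, Subgroup.mem_centralizer_iff, Set.forall_mem_range,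
    Prod.forall, SetLike.mem_coe, mem_graphSubgroup_iff, Prod.mk_mul_mk, Prod.inv_mk, one_mul,
    mul_one, inv_one]
  constructor
  · intro h a
    exact (mul_inv_eq_iff_eq_mul.mp ((h a (f a)).mp rfl)).symm
  · intro h a b
    rw [mul_inv_eq_iff_eq_mul, h a, mul_right_inj]

theorem mul_mem_centralizer_of_mem_normalizer_graphSubgroup {g : G} {s : S}
    (h : (g, s) ∈ Subgroup.normalizer (f.graphSubgroup : Set (G × S))) :
    (f g)⁻¹ * s ∈ Subgroup.centralizer (Set.range f) := by
  have hgraph : (g, f g) ∈ Subgroup.normalizer (f.graphSubgroup : Set (G × S)) :=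
    Subgroup.le_normalizer rfl
  have := mul_mem (inv_mem hgraph) h
  rwa [Prod.inv_mk, Prod.mk_mul_mk, inv_mul_cancel, mk_one_mem_normalizer_graphSubgroup_iff] at this

def centralizerToWeylGraph :
    Subgroup.centralizer (Set.range f) →*
      Subgroup.normalizer (f.graphSubgroup : Set (G × S)) ⧸
        f.graphSubgroup.subgroupOf (Subgroup.normalizer (f.graphSubgroup : Set (G × S))) :=
  (QuotientGroup.mk' _).comp <|
    ((MonoidHom.inr G S).comp (Subgroup.centralizer _).subtype).codRestrict _
      fun σ => (f.mk_one_mem_normalizer_graphSubgroup_iff σ).mpr σ.2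

theorem centralizerToWeylGraph_apply (σ : Subgroup.centralizer (Set.range f))
    (hmem : ((1 : G), (σ : S)) ∈ Subgroup.normalizer (f.graphSubgroup : Set (G × S))) :
    f.centralizerToWeylGraph σ = QuotientGroup.mk ⟨((1 : G), (σ : S)), hmem⟩ :=
  rfl

theorem centralizerToWeylGraph_injective : Function.Injective f.centralizerToWeylGraph := by
  refine (injective_iff_map_eq_one _).mpr fun σ hσ => ?_
  have hσΓ : ((1 : G), (σ : S)) ∈ f.graphSubgroup :=
    Subgroup.mem_subgroupOf.mp ((QuotientGroup.eq_one_iff _).mp hσ)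
  exact Subtype.ext (hσΓ.trans f.map_one)

theorem centralizerToWeylGraph_surjective : Function.Surjective f.centralizerToWeylGraph := by
  intro x
  obtain ⟨⟨⟨g, s⟩, hgs⟩, rfl⟩ := QuotientGroup.mk_surjective x
  have hgraph : (g, f g) ∈ Subgroup.normalizer (f.graphSubgroup : Set (G × S)) :=
    Subgroup.le_normalizer rfl
  have hgraph_one : (⟨(g, f g), hgraph⟩ : Subgroup.normalizer (f.graphSubgroup : Set (G × S))) ∈
      f.graphSubgroup.subgroupOf (Subgroup.normalizer (f.graphSubgroup : Set (G × S))) :=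
    rfl
  have hc := f.mul_mem_centralizer_of_mem_normalizer_graphSubgroup hgs
  refine ⟨⟨(f g)⁻¹ * s, hc⟩, ?_⟩
  calc f.centralizerToWeylGraph _
      = QuotientGroup.mk (⟨(g, f g), hgraph⟩⁻¹ * ⟨(g, s), hgs⟩) := by
        rw [f.centralizerToWeylGraph_apply _ ((f.mk_one_mem_normalizer_graphSubgroup_iff _).mpr hc)]
        exact congrArg QuotientGroup.mk (Subtype.ext (by simp))
    _ = QuotientGroup.mk ⟨(g, s), hgs⟩ := by
        rw [QuotientGroup.mk_mul, QuotientGroup.mk_inv, (QuotientGroup.eq_one_iff _).mpr hgraph_one,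
          inv_one, one_mul]

end MonoidHom

theorem autG_mulEquiv_weyl_of_graph_general {n : ℕ} {G : Type*} [Group G]
    (f : G →* Equiv.Perm (Fin n)) :
    ∃ e : Subgroup.centralizer (Set.range f) ≃*
        ((Subgroup.normalizer (f.graphSubgroup : Set (G × Equiv.Perm (Fin n)))) ⧸
          f.graphSubgroup.subgroupOf (Subgroup.normalizer (f.graphSubgroup : Set (G × Equiv.Perm (Fin n))))),
      ∀ (σ : Subgroup.centralizer (Set.range f))
        (hmem : ((1 : G), (σ : Equiv.Perm (Fin n))) ∈ (Subgroup.normalizer (f.graphSubgroup : Set (G × Equiv.Perm (Fin n))))),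
        e σ = QuotientGroup.mk
          (⟨((1 : G), (σ : Equiv.Perm (Fin n))), hmem⟩ : (Subgroup.normalizer (f.graphSubgroup : Set (G × Equiv.Perm (Fin n))))) :=
  ⟨MulEquiv.ofBijective f.centralizerToWeylGraph
      ⟨f.centralizerToWeylGraph_injective, f.centralizerToWeylGraph_surjective⟩,
    f.centralizerToWeylGraph_apply⟩

/-- For a finite group `G` and a finite `G`-set `T` of cardinality `n` given by
`f : G → Σ_n`, the map `σ ↦ [(e,σ)]` is a group isomorphism from
`Aut_G(T)` (the centralizer of the image of `f` in `Σ_n`) to the Weyl group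
`W_{G×Σ_n}(Γ_T) = N_{G×Σ_n}(Γ_T)/Γ_T` of the graph subgroup. -/
theorem autG_mulEquiv_weyl_of_graph {n : ℕ} {G : Type*} [Group G] [Fintype G]
    (f : G →* Equiv.Perm (Fin n)) :
    ∃ e : Subgroup.centralizer (Set.range f) ≃*
        ((Subgroup.normalizer (f.graphSubgroup : Set (G × Equiv.Perm (Fin n)))) ⧸
          f.graphSubgroup.subgroupOf (Subgroup.normalizer (f.graphSubgroup : Set (G × Equiv.Perm (Fin n))))),
      ∀ (σ : Subgroup.centralizer (Set.range f))
        (hmem : ((1 : G), (σ : Equiv.Perm (Fin n))) ∈ (Subgroup.normalizer (f.graphSubgroup : Set (G × Equiv.Perm (Fin n))))),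
        e σ = QuotientGroup.mk
          (⟨((1 : G), (σ : Equiv.Perm (Fin n))), hmem⟩ : (Subgroup.normalizer (f.graphSubgroup : Set (G × Equiv.Perm (Fin n))))) :=
  autG_mulEquiv_weyl_of_graph_general f
end

section
/- Let G be a finite group, K, H ≤ G, and g ∈ G with g⁻¹Kg ⊆ H. Then the stabilizer in W_G(K) = N_G(K)/K of the double coset KgH (under the action n·KgH = KngH) equals the image of N_{gHg⁻¹}(K), i.e., it is isomorphic to W_{gHg⁻¹}(K) = N_{gHg⁻¹}(K)/K. Explicitly, [n] stabilizes KgH iff n = kgh g⁻¹ for some k ∈ K, h ∈ H, equivalently [n] = [ghg⁻¹] for some h ∈ H with ghg⁻¹ ∈ N_G(K). -/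
/-!
`K(ng)H = KgH` means `ng ∈ KgH`, i.e. `n ∈ K · gHg⁻¹`. If moreover `n` normalizes `K`, then so
does its `gHg⁻¹`-factor, since it differs from `n` by an element of `K ≤ N_G(K)`.
-/

namespace DoubleCoset

variable {G : Type*} [Group G]

theorem mk_mul_eq_mk_iff (K H : Subgroup G) (n g : G) :
    mk K H (n * g) = mk K H g ↔ ∃ k ∈ K, ∃ h ∈ H, n = k * (g * h * g⁻¹) := by
  rw [DoubleCoset.eq]
  constructor
  · rintro ⟨k, hk, h, hh, heq⟩
    refine ⟨k⁻¹, K.inv_mem hk, h⁻¹, H.inv_mem hh, ?_⟩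
    calc n = k⁻¹ * (k * (n * g) * h) * h⁻¹ * g⁻¹ := by group
      _ = k⁻¹ * (g * h⁻¹ * g⁻¹) := by rw [← heq]; group
  · rintro ⟨k, hk, h, hh, rfl⟩
    exact ⟨k⁻¹, K.inv_mem hk, h⁻¹, H.inv_mem hh, by group⟩

end DoubleCoset

namespace Subgroup

variable {G : Type*} [Group G]

theorem exists_mul_conj_iff_exists_mem_map_conj (K H : Subgroup G) (g n : G) :
    (∃ k ∈ K, ∃ h ∈ H, n = k * (g * h * g⁻¹)) ↔
      ∃ b ∈ H.map (MulAut.conj g).toMonoidHom, n * b⁻¹ ∈ K := by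
  simp only [mem_map, MulEquiv.coe_toMonoidHom, MulAut.conj_apply]
  constructor
  · rintro ⟨k, hk, h, hh, rfl⟩
    exact ⟨g * h * g⁻¹, ⟨h, hh, rfl⟩, by rwa [mul_inv_cancel_right]⟩
  · rintro ⟨_, ⟨h, hh, rfl⟩, hnb⟩
    exact ⟨_, hnb, h, hh, by group⟩

theorem mem_normalizer_of_mul_inv_mem {K : Subgroup G} {n b : G}
    (hn : n ∈ normalizer (K : Set G)) (hnb : n * b⁻¹ ∈ K) : b ∈ normalizer (K : Set G) := by
  have hb : b = (n * b⁻¹)⁻¹ * n := by group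
  rw [hb]
  exact mul_mem (inv_mem (le_normalizer hnb)) hn

end Subgroup

open Subgroup in
theorem stabilizer_of_double_coset_general {G : Type*} [Group G]
    (K H : Subgroup G) (g : G) :
    ∀ n ∈ Subgroup.normalizer (K : Set G),
      (DoubleCoset.mk K H (n * g) = DoubleCoset.mk K H g ↔
        ∃ k ∈ K, ∃ h ∈ H, n = k * (g * h * g⁻¹)) ∧
      (DoubleCoset.mk K H (n * g) = DoubleCoset.mk K H g ↔
        ∃ b ∈ Subgroup.map (MulAut.conj g).toMonoidHom H ⊓ Subgroup.normalizer (K : Set G),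
          n * b⁻¹ ∈ K) := by
  intro n hn
  have hstab := DoubleCoset.mk_mul_eq_mk_iff K H n g
  refine ⟨hstab, hstab.trans <| (exists_mul_conj_iff_exists_mem_map_conj K H g n).trans ?_⟩
  constructor
  · rintro ⟨b, hb, hnb⟩
    exact ⟨b, ⟨hb, mem_normalizer_of_mul_inv_mem hn hnb⟩, hnb⟩
  · rintro ⟨b, hb, hnb⟩
    exact ⟨b, mem_inf.mp hb |>.1, hnb⟩

/-- Let `g ∈ G` with `g⁻¹Kg ⊆ H`.  An element `[n]` of the Weyl group
`W_G(K) = N_G(K)/K` stabilizes the double coset `KgH` (for the action `n·KgH = K(ng)H`)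
iff `n = k·(ghg⁻¹)` for some `k ∈ K`, `h ∈ H`; equivalently, iff `n` agrees modulo `K`
with an element of `N_{gHg⁻¹}(K) = gHg⁻¹ ∩ N_G(K)`, so the stabilizer is the image of
`N_{gHg⁻¹}(K)`, i.e. isomorphic to `W_{gHg⁻¹}(K)`. -/
theorem stabilizer_of_double_coset {G : Type*} [Group G] [Fintype G]
    (K H : Subgroup G) (g : G) (hg : ∀ k ∈ K, g⁻¹ * k * g ∈ H) :
    ∀ n ∈ Subgroup.normalizer (K : Set G),
      (DoubleCoset.mk K H (n * g) = DoubleCoset.mk K H g ↔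
        ∃ k ∈ K, ∃ h ∈ H, n = k * (g * h * g⁻¹)) ∧
      (DoubleCoset.mk K H (n * g) = DoubleCoset.mk K H g ↔
        ∃ b ∈ Subgroup.map (MulAut.conj g).toMonoidHom H ⊓ Subgroup.normalizer (K : Set G),
          n * b⁻¹ ∈ K) :=
  stabilizer_of_double_coset_general K H g
end

section
/- Let G be a finite group and K, H ≤ G. Define (K)_{G;H} to be the set of H-conjugacy classes of subgroups of the form g⁻¹Kg (g ∈ G) that are contained in H. The map θ : (K:G:H) → (K)_{G;H} sending the double coset KgH to the H-conjugacy class of g⁻¹Kg is well-defined, surjective, invariant under the W_G(K)-action on (K:G:H), and induces a bijection (K:G:H)/W_G(K) ≅ (K)_{G;H}. -/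
/-!
Everything follows from the cocycle rule `(ab)⁻¹K(ab) = b⁻¹(a⁻¹Ka)b` and the fact that
`n⁻¹Kn = K` exactly when `n` normalizes `K`. Since conjugation is injective on subgroups,
`(ng)⁻¹K(ng) = g⁻¹Kg` holds exactly when `n ∈ N_G(K)`. Thus changing the representative of
`KgH` to `kgh` changes `g⁻¹Kg` by `h`-conjugation, the Weyl action does not change it, and if
`g'⁻¹Kg' = h⁻¹g⁻¹Kgh` then `n = g'(gh)⁻¹` normalizes `K` and `KngH = Kg'H`.
-/

variable {G : Type*} [Group G]

/-- `θ' g = g⁻¹ K g`, the conjugate subgroup attached to a double-coset representative. -/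
def conjSub (K : Subgroup G) (g : G) : Subgroup G :=
  Subgroup.map (MulAut.conj g⁻¹).toMonoidHom K

section

variable (K : Subgroup G)

theorem conjSub_mul (a b : G) :
    conjSub K (a * b) = (conjSub K a).map (MulAut.conj b⁻¹).toMonoidHom := by
  rw [conjSub, conjSub, Subgroup.map_map, mul_inv_rev, map_mul]
  rfl

theorem conjSub_eq_self_iff {n : G} :
    conjSub K n = K ↔ n ∈ Subgroup.normalizer (K : Set G) := by
  rw [← inv_mem_iff, Subgroup.mem_normalizer_iff_map_conj_eq]
  rfl

theorem conjSub_mul_eq_conjSub_iff {n : G} (g : G) :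
    conjSub K (n * g) = conjSub K g ↔ n ∈ Subgroup.normalizer (K : Set G) := by
  rw [← conjSub_eq_self_iff, conjSub_mul]
  exact (Subgroup.map_injective (MulAut.conj g⁻¹).injective).eq_iff

theorem conjSub_le_iff (g : G) (H : Subgroup G) :
    conjSub K g ≤ H ↔ ∀ k ∈ K, g⁻¹ * k * g ∈ H := by
  simp [conjSub, SetLike.le_def]

end

theorem theta_induces_bijection_general {G : Type*} [Group G] (K H : Subgroup G) :
    -- well defined up to H-conjugacy
    (∀ g g' : G, DoubleCoset.mk K H g = DoubleCoset.mk K H g' →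
      ∃ h ∈ H, conjSub K g' = Subgroup.map (MulAut.conj h⁻¹).toMonoidHom (conjSub K g)) ∧
    -- invariance under the Weyl action
    (∀ n ∈ Subgroup.normalizer (K : Set G), ∀ g : G, conjSub K (n * g) = conjSub K g) ∧
    -- surjectivity onto G-conjugates of K contained in H
    (∀ L : Subgroup G, (∃ g : G, L = conjSub K g) → L ≤ H →
      ∃ g : G, (∀ k ∈ K, g⁻¹ * k * g ∈ H) ∧ conjSub K g = L) ∧
    -- injectivity on Weyl orbits
    (∀ g g' : G, (∀ k ∈ K, g⁻¹ * k * g ∈ H) → (∀ k ∈ K, g'⁻¹ * k * g' ∈ H) →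
      (∃ h ∈ H, conjSub K g' = Subgroup.map (MulAut.conj h⁻¹).toMonoidHom (conjSub K g)) →
      ∃ n ∈ Subgroup.normalizer (K : Set G), DoubleCoset.mk K H (n * g) = DoubleCoset.mk K H g') := by
  refine ⟨?_, fun n hn g ↦ (conjSub_mul_eq_conjSub_iff K g).2 hn, ?_, ?_⟩
  · intro g g' hgg'
    obtain ⟨k, hk, h, hh, rfl⟩ := (DoubleCoset.eq K H g g').1 hgg'
    have hk : k ∈ Subgroup.normalizer (K : Set G) := Subgroup.le_normalizer hk
    exact ⟨h, hh, by rw [conjSub_mul, (conjSub_mul_eq_conjSub_iff K g).2 hk]⟩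
  · rintro L ⟨g, rfl⟩ hL
    exact ⟨g, (conjSub_le_iff K g H).1 hL, rfl⟩
  · rintro g g' - - ⟨h, hh, hconj⟩
    rw [← conjSub_mul] at hconj
    refine ⟨g' * (g * h)⁻¹, ?_, (DoubleCoset.eq K H _ _).2 ⟨1, K.one_mem, h, hh, by group⟩⟩
    rw [← conjSub_mul_eq_conjSub_iff K (g * h), inv_mul_cancel_right, hconj]

/-- The map `θ : (K:G:H) → (K)_{G;H}`, `KgH ↦ [g⁻¹Kg]_H`, is well defined
(representatives of the same double coset give `H`-conjugate subgroups), invariant under the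
`W_G(K)`-action `n·KgH = KngH` (indeed `(ng)⁻¹K(ng) = g⁻¹Kg`), surjective onto the set of
`H`-conjugacy classes of `G`-conjugates of `K` lying in `H`, and injective on `W_G(K)`-orbits;
hence it induces a bijection `(K:G:H)/W_G(K) ≅ (K)_{G;H}`. -/
theorem theta_induces_bijection {G : Type*} [Group G] [Fintype G] (K H : Subgroup G) :
    -- well defined up to H-conjugacy
    (∀ g g' : G, DoubleCoset.mk K H g = DoubleCoset.mk K H g' →
      ∃ h ∈ H, conjSub K g' = Subgroup.map (MulAut.conj h⁻¹).toMonoidHom (conjSub K g)) ∧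
    -- invariance under the Weyl action
    (∀ n ∈ Subgroup.normalizer (K : Set G), ∀ g : G, conjSub K (n * g) = conjSub K g) ∧
    -- surjectivity onto G-conjugates of K contained in H
    (∀ L : Subgroup G, (∃ g : G, L = conjSub K g) → L ≤ H →
      ∃ g : G, (∀ k ∈ K, g⁻¹ * k * g ∈ H) ∧ conjSub K g = L) ∧
    -- injectivity on Weyl orbits
    (∀ g g' : G, (∀ k ∈ K, g⁻¹ * k * g ∈ H) → (∀ k ∈ K, g'⁻¹ * k * g' ∈ H) →
      (∃ h ∈ H, conjSub K g' = Subgroup.map (MulAut.conj h⁻¹).toMonoidHom (conjSub K g)) →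
      ∃ n ∈ Subgroup.normalizer (K : Set G), DoubleCoset.mk K H (n * g) = DoubleCoset.mk K H g') :=
  theta_induces_bijection_general K H
end

section
/- Let G be a finite group and H, K ≤ G with K ≤ H. Suppose a collection C of finite G-sets and H-sets (an indexing system) is closed under: restriction, self-induction (if H/L ∈ C(H) and T ∈ C(L) then H ×_L T ∈ C(H)), isomorphism, finite limits (in particular passage to summands/orbits), and contains G/H ∈ C(G). Then G/K ∈ C(G) if and only if H/(g⁻¹Kg) ∈ C(H) for every g ∈ G with g⁻¹Kg ⊆ H. -/
theorem admissible_orbit_iff_general {G : Type*} [Group G]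
    (adm : Subgroup G → Subgroup G → Prop)
    (h_conj : ∀ (A B : Subgroup G) (g : G), adm A B →
      adm (Subgroup.map (MulAut.conj g⁻¹).toMonoidHom A)
        (Subgroup.map (MulAut.conj g⁻¹).toMonoidHom B))
    (h_res : ∀ A B M, adm A B → M ≤ B → adm (A ⊓ M) M)
    (h_selfind : ∀ A B C, adm A B → adm B C → adm A C)
    (K H : Subgroup G) (hKH : K ≤ H) (hH : adm H ⊤) :
    adm K ⊤ ↔
      ∀ g : G, Subgroup.map (MulAut.conj g⁻¹).toMonoidHom K ≤ H →
        adm (Subgroup.map (MulAut.conj g⁻¹).toMonoidHom K) H := by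
  constructor
  · intro hK g hg
    have hconj_top : (⊤ : Subgroup G).map (MulAut.conj g⁻¹).toMonoidHom = ⊤ :=
      Subgroup.map_top_of_surjective _ (MulAut.conj g⁻¹).surjective
    have hconj : adm (K.map (MulAut.conj g⁻¹).toMonoidHom) ⊤ := hconj_top ▸ h_conj K ⊤ g hK
    simpa only [inf_eq_left.mpr hg] using h_res _ ⊤ H hconj le_top
  · intro h
    have hconj_one : K.map (MulAut.conj (1 : G)⁻¹).toMonoidHom = K := by ext; simp
    have hK : adm K H := by simpa only [hconj_one] using h 1 (hconj_one.symm ▸ hKH)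
    exact h_selfind K H ⊤ hK hH

/-- Model an indexing system by its admissible orbits: `adm A B` means that
`A ≤ B` and the orbit `B/A` is admissible (i.e. `B/A ∈ C(B)`).  The closure properties of an
indexing system (trivial orbits, conjugation/isomorphism, restriction to subgroups with
passage to summands, and self-induction/composition) are taken as hypotheses.  Then, for
`K ≤ H` with `G/H` admissible (`adm H ⊤`): `G/K` is admissible iff `H/(g⁻¹Kg)` is admissible
for every `g ∈ G` with `g⁻¹Kg ⊆ H`. -/
theorem admissible_orbit_iff {G : Type*} [Group G] [Fintype G]
    (adm : Subgroup G → Subgroup G → Prop)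
    (h_le : ∀ A B, adm A B → A ≤ B)
    (h_refl : ∀ A, adm A A)
    (h_conj : ∀ (A B : Subgroup G) (g : G), adm A B →
      adm (Subgroup.map (MulAut.conj g⁻¹).toMonoidHom A)
        (Subgroup.map (MulAut.conj g⁻¹).toMonoidHom B))
    (h_res : ∀ A B M, adm A B → M ≤ B → adm (A ⊓ M) M)
    (h_selfind : ∀ A B C, adm A B → adm B C → adm A C)
    (K H : Subgroup G) (hKH : K ≤ H) (hH : adm H ⊤) :
    adm K ⊤ ↔
      ∀ g : G, Subgroup.map (MulAut.conj g⁻¹).toMonoidHom K ≤ H →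
        adm (Subgroup.map (MulAut.conj g⁻¹).toMonoidHom K) H :=
  admissible_orbit_iff_general adm h_conj h_res h_selfind K H hKH hH
end

section
/- Let G be a finite group, H ≤ G a proper subgroup, T a finite H-set of cardinality n with graph subgroup Γ_T ≤ H × Σ_n ≤ G × Σ_n. Then for any (G × Σ_n)-set Y, the G-set ((G×Σ_n)/Γ_T) ×_{Σ_n} Y is isomorphic to G ×_H (((H×Σ_n)/Γ_T) ×_{Σ_n} Y), and in particular it has no G-fixed points when H is a proper subgroup. -/
/-! Since `Γ_T` projects into `H`, the `G`-coordinate of a representative `((g, σ), y)` of the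
balanced product is well defined up to right multiplication by `H`; this gives the isomorphism
`[(g, σ)Γ_T, y] ↦ [g, [(1, σ)Γ_T, (g⁻¹, 1) • y]]`, with inverse
`[g, [(h, σ)Γ_T, y]] ↦ [(g h, σ)Γ_T, (g, 1) • y]`. An induced set maps equivariantly onto
`G ⧸ H`, which has no `G`-fixed point unless `H = ⊤`. -/

section

variable {G : Type*} [Group G] (H : Subgroup G) {n : ℕ}
  (f : H →* Equiv.Perm (Fin n))

/-- The graph `Γ_T` of `f : H → Σ_n`, viewed as a subgroup of `G × Σ_n`
(via `Γ_T ≤ H × Σ_n ≤ G × Σ_n`). -/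
def graphInAmbient : Subgroup (G × Equiv.Perm (Fin n)) where
  carrier := {p | ∃ hh : p.1 ∈ H, p.2 = f ⟨p.1, hh⟩}
  one_mem' := ⟨H.one_mem, (map_one f).symm⟩
  mul_mem' := by
    intro p q hp hq
    obtain ⟨ha, hb⟩ := hp
    obtain ⟨hc, hd⟩ := hq
    exact ⟨H.mul_mem ha hc, by show p.2 * q.2 = _; rw [hb, hd, ← map_mul]; rfl⟩
  inv_mem' := by
    intro p hp
    obtain ⟨ha, hb⟩ := hp
    exact ⟨H.inv_mem ha, by show p.2⁻¹ = _; rw [hb, ← map_inv]; rfl⟩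

/-- The graph `Γ_T` of `f : H → Σ_n` as a subgroup of `H × Σ_n`. -/
def graphInH : Subgroup (H × Equiv.Perm (Fin n)) where
  carrier := {p | p.2 = f p.1}
  one_mem' := by simp
  mul_mem' := by
    rintro ⟨a, b⟩ ⟨c, d⟩ (hb : b = f a) (hd : d = f c)
    simp [hb, hd]
  inv_mem' := by
    rintro ⟨a, b⟩ (hb : b = f a)
    simp [hb]

lemma smul_one_aux {α : Type*} [MulAction (G × Equiv.Perm (Fin n)) α]
    (a b : Equiv.Perm (Fin n)) (y : α) :
    ((1, a) : G × Equiv.Perm (Fin n)) • ((1, b) : G × Equiv.Perm (Fin n)) • y =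
      ((1, a * b) : G × Equiv.Perm (Fin n)) • y := by
  rw [smul_smul, Prod.mk_mul_mk, one_mul]

variable (Y : Type*) [MulAction (G × Equiv.Perm (Fin n)) Y]

/-- The antidiagonal `Σ_n`-relation defining `((G×Σ_n)/Γ_T) ×_{Σ_n} Y`. -/
def balSetoidG : Setoid (((G × Equiv.Perm (Fin n)) ⧸ graphInAmbient H f) × Y) where
  r z z' := ∃ σ : Equiv.Perm (Fin n),
    z'.1 = ((1, σ) : G × Equiv.Perm (Fin n)) • z.1 ∧
    z'.2 = ((1, σ) : G × Equiv.Perm (Fin n)) • z.2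
  iseqv := by
    constructor
    · exact fun z => ⟨1, by simp [Prod.mk_one_one], by simp [Prod.mk_one_one]⟩
    · rintro z z' ⟨σ, h1, h2⟩
      exact ⟨σ⁻¹, by rw [h1, smul_one_aux]; simp [Prod.mk_one_one], by rw [h2, smul_one_aux]; simp [Prod.mk_one_one]⟩
    · rintro z z' z'' ⟨σ, h1, h2⟩ ⟨τ, h1', h2'⟩
      exact ⟨τ * σ, by rw [h1', h1, smul_one_aux], by rw [h2', h2, smul_one_aux]⟩

/-- The balanced product `((G×Σ_n)/Γ_T) ×_{Σ_n} Y`, a `G`-set. -/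
def BalG : Type _ := Quotient (balSetoidG H f Y)

lemma smul_comm_aux {α : Type*} [MulAction (G × Equiv.Perm (Fin n)) α]
    (g : G) (σ : Equiv.Perm (Fin n)) (y : α) :
    ((1, σ) : G × Equiv.Perm (Fin n)) • ((g, 1) : G × Equiv.Perm (Fin n)) • y =
      ((g, 1) : G × Equiv.Perm (Fin n)) • ((1, σ) : G × Equiv.Perm (Fin n)) • y := by
  rw [smul_smul, smul_smul, Prod.mk_mul_mk, Prod.mk_mul_mk]
  rw [one_mul, mul_one, one_mul, mul_one]

/-- The `G`-action on `BalG`. -/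
def BalG.act (g : G) : BalG H f Y → BalG H f Y :=
  Quotient.map
    (fun z => (((g, 1) : G × Equiv.Perm (Fin n)) • z.1,
               ((g, 1) : G × Equiv.Perm (Fin n)) • z.2))
    (by
      rintro z z' ⟨σ, h1, h2⟩
      exact ⟨σ, by dsimp only; rw [h1, smul_comm_aux],
        by dsimp only; rw [h2, smul_comm_aux]⟩)

/-- The analogous balanced product relation for `((H×Σ_n)/Γ_T) ×_{Σ_n} Y`. -/
def balSetoidH : Setoid (((H × Equiv.Perm (Fin n)) ⧸ graphInH H f) × Y) where
  r z z' := ∃ σ : Equiv.Perm (Fin n),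
    z'.1 = ((1, σ) : H × Equiv.Perm (Fin n)) • z.1 ∧
    z'.2 = ((1, σ) : G × Equiv.Perm (Fin n)) • z.2
  iseqv := by
    constructor
    · exact fun z => ⟨1, by simp [Prod.mk_one_one], by simp [Prod.mk_one_one]⟩
    · rintro z z' ⟨σ, h1, h2⟩
      refine ⟨σ⁻¹, ?_, by rw [h2, smul_one_aux]; simp [Prod.mk_one_one]⟩
      rw [h1, smul_smul, Prod.mk_mul_mk, one_mul]
      simp [Prod.mk_one_one]
    · rintro z z' z'' ⟨σ, h1, h2⟩ ⟨τ, h1', h2'⟩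
      refine ⟨τ * σ, ?_, by rw [h2', h2, smul_one_aux]⟩
      rw [h1', h1, smul_smul, Prod.mk_mul_mk, one_mul]

/-- The balanced product `((H×Σ_n)/Γ_T) ×_{Σ_n} Y`, an `H`-set. -/
def BalH : Type _ := Quotient (balSetoidH H f Y)

/-- The `H`-action on `BalH`. -/
def BalH.act (h : H) : BalH H f Y → BalH H f Y :=
  Quotient.map
    (fun z => (((h, 1) : H × Equiv.Perm (Fin n)) • z.1,
               (((h : G), 1) : G × Equiv.Perm (Fin n)) • z.2))
    (by
      rintro z z' ⟨σ, h1, h2⟩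
      refine ⟨σ, ?_, by dsimp only; rw [h2, smul_comm_aux]⟩
      dsimp only
      rw [h1, smul_smul, smul_smul, Prod.mk_mul_mk, Prod.mk_mul_mk]
      rw [one_mul, mul_one, one_mul, mul_one])

lemma BalH.act_one (z : BalH H f Y) : BalH.act H f Y 1 z = z := by
  refine Quotient.inductionOn z fun p => ?_
  show Quotient.mk _ _ = Quotient.mk _ _
  simp [BalH.act, Prod.mk_one_one]

lemma BalH.act_mul (a b : H) (z : BalH H f Y) :
    BalH.act H f Y (a * b) z = BalH.act H f Y a (BalH.act H f Y b z) := by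
  refine Quotient.inductionOn z fun p => ?_
  simp only [BalH.act, Quotient.map_mk]
  congr 1
  refine Prod.ext ?_ ?_
  · show ((a * b, 1) : H × Equiv.Perm (Fin n)) • p.1 = _
    rw [smul_smul, Prod.mk_mul_mk, mul_one]
  · show (((↑(a * b) : G), 1) : G × Equiv.Perm (Fin n)) • p.2 =
      (((↑a : G), 1) : G × Equiv.Perm (Fin n)) • (((↑b : G), 1) : G × Equiv.Perm (Fin n)) • p.2
    rw [smul_smul, Prod.mk_mul_mk, mul_one, Subgroup.coe_mul]

/-- The induction relation defining `G ×_H (BalH)`. -/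
def indSetoidBal : Setoid (G × BalH H f Y) where
  r p q := ∃ h : H, q.1 = p.1 * h ∧ q.2 = BalH.act H f Y h⁻¹ p.2
  iseqv := by
    constructor
    · exact fun p => ⟨1, by simp, by rw [inv_one, BalH.act_one]⟩
    · rintro p q ⟨h, h1, h2⟩
      refine ⟨h⁻¹, by simp [h1, mul_assoc], ?_⟩
      rw [inv_inv, h2, ← BalH.act_mul, mul_inv_cancel, BalH.act_one]
    · rintro p q r ⟨h, h1, h2⟩ ⟨h', h1', h2'⟩
      refine ⟨h * h', by simp [h1', h1, mul_assoc], ?_⟩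
      rw [h2', h2, ← BalH.act_mul, mul_inv_rev]

/-- The induced `G`-set `G ×_H (((H×Σ_n)/Γ_T) ×_{Σ_n} Y)`. -/
def IndBalH : Type _ := Quotient (indSetoidBal H f Y)

/-- The `G`-action on `G ×_H (BalH)`. -/
def IndBalH.act (g : G) : IndBalH H f Y → IndBalH H f Y :=
  Quotient.map (fun p => (g * p.1, p.2))
    (by rintro p q ⟨h, h1, h2⟩; exact ⟨h, by simp [h1, mul_assoc], h2⟩)

end

open Equiv

theorem Subgroup.eq_top_of_forall_smul_eq {G : Type*} [Group G] {H : Subgroup G}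
    {x : G ⧸ H} (hx : ∀ g : G, g • x = x) : H = ⊤ := by
  induction x using QuotientGroup.induction_on with
  | H a =>
    refine (Subgroup.eq_top_iff' H).mpr fun w => ?_
    have hw : ((a * w * a⁻¹ * a : G) : G ⧸ H) = a := hx (a * w * a⁻¹)
    simpa [QuotientGroup.eq, mul_assoc] using hw

section

variable {G : Type*} [Group G] (H : Subgroup G) {n : ℕ} (f : H →* Perm (Fin n))
  {Y : Type*} [MulAction (G × Perm (Fin n)) Y]

namespace BalG

def mk (p : G × Perm (Fin n)) (y : Y) : BalG H f Y :=
  Quotient.mk _ (QuotientGroup.mk p, y)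

@[elab_as_elim]
theorem induction_on {motive : BalG H f Y → Prop} (z : BalG H f Y)
    (hmk : ∀ p y, motive (mk H f p y)) : motive z := by
  induction z using Quotient.inductionOn with
  | h z =>
    obtain ⟨x, y⟩ := z
    induction x using QuotientGroup.induction_on with
    | H p => exact hmk p y

theorem mk_mul_of_mem (p : G × Perm (Fin n)) {γ : G × Perm (Fin n)}
    (hγ : γ ∈ graphInAmbient H f) (y : Y) : mk H f (p * γ) y = mk H f p y := by
  rw [mk, QuotientGroup.mk_mul_of_mem p hγ, mk]

theorem mk_perm_smul (σ : Perm (Fin n)) (p : G × Perm (Fin n)) (y : Y) :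
    mk H f ((1, σ) * p) (((1 : G), σ) • y) = mk H f p y :=
  (Quotient.sound (s := balSetoidG H f Y) ⟨σ, rfl, rfl⟩).symm

theorem act_mk (g : G) (p : G × Perm (Fin n)) (y : Y) :
    act H f Y g (mk H f p y) = mk H f ((g, 1) * p) ((g, (1 : Perm (Fin n))) • y) :=
  rfl

def lift {α : Sort*} (F : G × Perm (Fin n) → Y → α)
    (hF_mul : ∀ p, ∀ γ ∈ graphInAmbient H f, ∀ y, F (p * γ) y = F p y)
    (hF_perm : ∀ (σ : Perm (Fin n)) p y, F ((1, σ) * p) (((1 : G), σ) • y) = F p y) :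
    BalG H f Y → α :=
  Quotient.lift
    (fun z => Quotient.liftOn z.1 (F · z.2) fun p q hpq => by
      simpa using (hF_mul p _ (QuotientGroup.leftRel_apply.mp hpq) z.2).symm)
    (by
      rintro ⟨x, y⟩ ⟨x', y'⟩ ⟨σ, h1, h2⟩
      dsimp only at h1 h2
      subst h1 h2
      induction x using QuotientGroup.induction_on with
      | H p => exact (hF_perm σ p y).symm)

@[simp]
theorem lift_mk {α : Sort*} (F : G × Perm (Fin n) → Y → α) hF_mul hF_perm
    (p : G × Perm (Fin n)) (y : Y) : lift H f F hF_mul hF_perm (mk H f p y) = F p y :=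
  rfl

end BalG

namespace IndBalH

def mk (g : G) (q : H × Perm (Fin n)) (y : Y) : IndBalH H f Y :=
  Quotient.mk _ (g, Quotient.mk _ (QuotientGroup.mk q, y))

@[elab_as_elim]
theorem induction_on {motive : IndBalH H f Y → Prop} (w : IndBalH H f Y)
    (hmk : ∀ g q y, motive (mk H f g q y)) : motive w := by
  induction w using Quotient.inductionOn with
  | h w =>
    obtain ⟨g, b⟩ := w
    induction b using Quotient.inductionOn with
    | h b =>
      obtain ⟨x, y⟩ := b
      induction x using QuotientGroup.induction_on with
      | H q => exact hmk g q y

theorem mk_mul_of_mem (g : G) (q : H × Perm (Fin n)) {γ : H × Perm (Fin n)}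
    (hγ : γ ∈ graphInH H f) (y : Y) : mk H f g (q * γ) y = mk H f g q y := by
  rw [mk, QuotientGroup.mk_mul_of_mem q hγ, mk]

theorem mk_perm_smul (g : G) (σ : Perm (Fin n)) (q : H × Perm (Fin n)) (y : Y) :
    mk H f g ((1, σ) * q) (((1 : G), σ) • y) = mk H f g q y := by
  have hσ : Quotient.mk (balSetoidH H f Y) (QuotientGroup.mk q, y) =
      Quotient.mk _ (QuotientGroup.mk ((1, σ) * q), ((1 : G), σ) • y) :=
    Quotient.sound ⟨σ, rfl, rfl⟩
  rw [mk, mk, hσ]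

theorem mk_mul_coe (g : G) (h : H) (q : H × Perm (Fin n)) (y : Y) :
    mk H f (g * h) q y = mk H f g ((h, 1) * q) (((h : G), (1 : Perm (Fin n))) • y) := by
  let b : BalH H f Y := Quotient.mk _ (QuotientGroup.mk q, y)
  have hb : BalH.act H f Y h⁻¹ (BalH.act H f Y h b) = b := by
    rw [← BalH.act_mul, inv_mul_cancel, BalH.act_one]
  exact (Quotient.sound (s := indSetoidBal H f Y) ⟨h, rfl, hb.symm⟩).symm

theorem act_mk (g g' : G) (q : H × Perm (Fin n)) (y : Y) :
    act H f Y g (mk H f g' q y) = mk H f (g * g') q y :=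
  rfl

def lift {α : Sort*} (F : G → H × Perm (Fin n) → Y → α)
    (hF_mul : ∀ g q, ∀ γ ∈ graphInH H f, ∀ y, F g (q * γ) y = F g q y)
    (hF_perm : ∀ g (σ : Perm (Fin n)) q y, F g ((1, σ) * q) (((1 : G), σ) • y) = F g q y)
    (hF_coe : ∀ g (h : H) q y,
      F (g * h) q y = F g ((h, 1) * q) (((h : G), (1 : Perm (Fin n))) • y)) :
    IndBalH H f Y → α :=
  Quotient.lift
    (fun p => Quotient.lift
      (fun z => Quotient.liftOn z.1 (F p.1 · z.2) fun q q' hqq' => by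
        simpa using (hF_mul p.1 q _ (QuotientGroup.leftRel_apply.mp hqq') z.2).symm)
      (by
        rintro ⟨x, y⟩ ⟨x', y'⟩ ⟨σ, h1, h2⟩
        dsimp only at h1 h2
        subst h1 h2
        induction x using QuotientGroup.induction_on with
        | H q => exact (hF_perm p.1 σ q y).symm)
      p.2)
    (by
      rintro ⟨g, b⟩ ⟨g', b'⟩ ⟨h, h1, h2⟩
      dsimp only at h1 h2
      subst h1 h2
      induction b using Quotient.inductionOn with
      | h b =>
        obtain ⟨x, y⟩ := b
        induction x using QuotientGroup.induction_on with
        | H q =>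
          change F g q y = F (g * h) ((h⁻¹, 1) * q) ((((h⁻¹ : H) : G), 1) • y)
          simp [hF_coe, smul_smul, ← mul_assoc, Prod.mk_mul_mk, Prod.mk_one_one])

@[simp]
theorem lift_mk {α : Sort*} (F : G → H × Perm (Fin n) → Y → α) hF_mul hF_perm hF_coe
    (g : G) (q : H × Perm (Fin n)) (y : Y) :
    lift H f F hF_mul hF_perm hF_coe (mk H f g q y) = F g q y :=
  rfl

def base : IndBalH H f Y → G ⧸ H :=
  lift H f (fun g _ _ => (g : G ⧸ H)) (fun _ _ _ _ _ => rfl) (fun _ _ _ _ => rfl)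
    fun g h _ _ => QuotientGroup.mk_mul_of_mem g h.2

theorem base_act (g : G) (w : IndBalH H f Y) : base H f (act H f Y g w) = g • base H f w := by
  induction w using induction_on with
  | hmk g' q y => rfl

theorem isEmpty_fixedPoints (hH : H ≠ ⊤) :
    IsEmpty {w : IndBalH H f Y // ∀ g : G, act H f Y g w = w} :=
  ⟨fun ⟨w, hw⟩ => hH (Subgroup.eq_top_of_forall_smul_eq (x := base H f w) fun g => by
    rw [← base_act, hw g])⟩

end IndBalH

end

section

variable {G : Type*} [Group G] (H : Subgroup G) {n : ℕ} (f : H →* Perm (Fin n))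
  (Y : Type*) [MulAction (G × Perm (Fin n)) Y]

def balToInd : BalG H f Y → IndBalH H f Y :=
  BalG.lift H f (fun p y => IndBalH.mk H f p.1 (1, p.2) ((p.1⁻¹, (1 : Perm (Fin n))) • y))
    (by
      rintro ⟨a, τ⟩ ⟨g, σ⟩ ⟨hg, hσ⟩ y
      rw [← IndBalH.mk_mul_of_mem H f a (1, τ) (γ := (⟨g, hg⟩, σ)) hσ]
      rw [Prod.mk_mul_mk, IndBalH.mk_mul_coe H f a ⟨g, hg⟩]
      simp [smul_smul])
    (by
      rintro σ ⟨a, τ⟩ y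
      rw [← IndBalH.mk_perm_smul H f a σ]
      simp [smul_smul])

def indToBal : IndBalH H f Y → BalG H f Y :=
  IndBalH.lift H f (fun g q y => BalG.mk H f (g * q.1, q.2) ((g, (1 : Perm (Fin n))) • y))
    (by
      rintro g ⟨a, τ⟩ ⟨b, σ⟩ hσ y
      rw [← BalG.mk_mul_of_mem H f (g * a, τ) (γ := ((b : G), σ)) ⟨b.2, hσ⟩]
      simp [mul_assoc])
    (by
      rintro g σ ⟨a, τ⟩ y
      rw [← BalG.mk_perm_smul H f σ (g * a, τ)]
      simp [smul_smul])
    (by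
      rintro g h ⟨a, τ⟩ y
      simp [smul_smul, mul_assoc])

theorem indToBal_balToInd (z : BalG H f Y) : indToBal H f Y (balToInd H f Y z) = z := by
  induction z using BalG.induction_on with
  | hmk p y => simp [balToInd, indToBal, smul_smul, Prod.mk_one_one]

theorem balToInd_indToBal (w : IndBalH H f Y) : balToInd H f Y (indToBal H f Y w) = w := by
  induction w using IndBalH.induction_on with
  | hmk g q y => simp [balToInd, indToBal, IndBalH.mk_mul_coe, smul_smul, Prod.mk_one_one]

def balEquivInd : BalG H f Y ≃ IndBalH H f Y where
  toFun := balToInd H f Y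
  invFun := indToBal H f Y
  left_inv := indToBal_balToInd H f Y
  right_inv := balToInd_indToBal H f Y

theorem balEquivInd_act (g : G) (z : BalG H f Y) :
    balEquivInd H f Y (BalG.act H f Y g z) = IndBalH.act H f Y g (balEquivInd H f Y z) := by
  induction z using BalG.induction_on with
  | hmk p y => simp [balEquivInd, balToInd, BalG.act_mk, IndBalH.act_mk, smul_smul, mul_assoc]

end

theorem balanced_is_induced_and_has_no_fixed_points_general
    {G : Type*} [Group G] (H : Subgroup G) (hH : H ≠ ⊤) {n : ℕ}
    (f : H →* Equiv.Perm (Fin n)) (Y : Type*)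
    [MulAction (G × Equiv.Perm (Fin n)) Y] :
    (∃ e : BalG H f Y ≃ IndBalH H f Y,
      ∀ (g : G) (z : BalG H f Y), e (BalG.act H f Y g z) = IndBalH.act H f Y g (e z)) ∧
    IsEmpty {z : BalG H f Y // ∀ g : G, BalG.act H f Y g z = z} := by
  refine ⟨⟨balEquivInd H f Y, balEquivInd_act H f Y⟩, ⟨fun ⟨z, hz⟩ => ?_⟩⟩
  exact (IndBalH.isEmpty_fixedPoints H f hH).false
    ⟨balEquivInd H f Y z, fun g => by rw [← balEquivInd_act, hz g]⟩

/-- For a proper subgroup `H < G` and a finite `H`-set `T` with graph subgroup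
`Γ_T ≤ H × Σ_n ≤ G × Σ_n`, and any `(G × Σ_n)`-set `Y`, the `G`-set
`((G×Σ_n)/Γ_T) ×_{Σ_n} Y` is isomorphic to the induced `G`-set
`G ×_H (((H×Σ_n)/Γ_T) ×_{Σ_n} Y)`; in particular it has no `G`-fixed points. -/
theorem balanced_is_induced_and_has_no_fixed_points
    {G : Type*} [Group G] [Fintype G] (H : Subgroup G) (hH : H ≠ ⊤) {n : ℕ}
    (f : H →* Equiv.Perm (Fin n)) (Y : Type*)
    [MulAction (G × Equiv.Perm (Fin n)) Y] :
    (∃ e : BalG H f Y ≃ IndBalH H f Y,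
      ∀ (g : G) (z : BalG H f Y), e (BalG.act H f Y g z) = IndBalH.act H f Y g (e z)) ∧
    IsEmpty {z : BalG H f Y // ∀ g : G, BalG.act H f Y g z = z} :=
  balanced_is_induced_and_has_no_fixed_points_general H hH f Y
end
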